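/- Let a, b, ε : [0,∞) → ℝ be continuous with a(t) ≥ a_min for all t ≥ 0 for some constant a_min > 0, ε(t) ≥ 0 for all t ≥ 0, and ε(t) → 0 as t → ∞. Let ŷ, y : [0,∞) → ℝ be differentiable with m ≤ ŷ(t) ≤ M and m ≤ y(t) ≤ M for all t ≥ 0, where 0 < m ≤ M are constants, and suppose ŷ′(t) = ŷ(t)(a(t) − ε(t) − b(t)·ŷ(t)) and y′(t) = y(t)(a(t) − b(t)·y(t)) for all t ≥ 0. Then y(t) − ŷ(t) → 0 as t → ∞. -/

import Mathlib

/-!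
The substitution `u = 1/y` turns the logistic equation `y' = y (a - b y)` into the linear
equation `u' = -a u + b`. Hence `s = 1/ŷ - 1/y` solves `s' = -a s + ε/ŷ`, a linear equation
with damping `a ≥ a_min > 0` and forcing `ε/ŷ → 0`, so `s → 0`: once the forcing is below
`a_min δ`, the weight `exp (a_min t) (s² - δ²)` is nonincreasing, which pushes `s²` below `2δ²`.
Finally `y - ŷ = y ŷ s` with `y ŷ` bounded.
-/

open Filter Set Topology Real

theorem HasDerivWithinAt.inv_of_logistic {y : ℝ → ℝ} {c d t : ℝ} {S : Set ℝ}
    (hy : HasDerivWithinAt y (y t * (c - d * y t)) S t) (hy0 : y t ≠ 0) :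
    HasDerivWithinAt (fun u => (y u)⁻¹) (-c * (y t)⁻¹ + d) S t := by
  refine (hy.inv hy0).congr_deriv ?_
  field_simp
  ring

theorem antitoneOn_exp_mul_sq_sub_sq {s a g : ℝ → ℝ} {α δ T : ℝ} (hα : 0 ≤ α)
    (hs : ∀ t ∈ Ici T, HasDerivWithinAt s (-a t * s t + g t) (Ici T) t)
    (ha : ∀ t ∈ Ici T, α ≤ a t) (hg : ∀ t ∈ Ici T, |g t| ≤ α * δ) :
    AntitoneOn (fun t => exp (α * t) * (s t ^ 2 - δ ^ 2)) (Ici T) := by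
  have hψ : ∀ t ∈ Ici T, HasDerivWithinAt (fun t => exp (α * t) * (s t ^ 2 - δ ^ 2))
      (exp (α * t) * (2 * s t * (-a t * s t + g t) + α * (s t ^ 2 - δ ^ 2))) (Ici T) t := by
    intro t ht
    have hexp := ((hasDerivAt_id t).const_mul α).exp.hasDerivWithinAt (s := Ici T)
    refine (hexp.mul (((hs t ht).fun_pow 2).sub_const (δ ^ 2))).congr_deriv ?_
    simp only [id, mul_one]
    ring
  refine antitoneOn_of_hasDerivWithinAt_nonpos (convex_Ici T)
    (fun t ht => (hψ t ht).continuousWithinAt)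
    (fun t ht => (hψ t (interior_subset ht)).mono interior_subset) fun t ht_int => ?_
  have ht := interior_subset ht_int
  -- `2 s g ≤ 2 |s| α δ ≤ α (s² + δ²)` absorbs the forcing, and `-a ≤ -α` does the rest.
  have hsg : 2 * s t * g t ≤ α * (s t ^ 2 + δ ^ 2) := by
    have hsg_abs : s t * g t ≤ |s t| * (α * δ) :=
      calc s t * g t ≤ |s t * g t| := le_abs_self _
        _ = |s t| * |g t| := abs_mul _ _
        _ ≤ |s t| * (α * δ) := by gcongr; exact hg t ht
    nlinarith [mul_nonneg hα (sq_nonneg (|s t| - δ)), sq_abs (s t)]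
  have has : α * s t ^ 2 ≤ a t * s t ^ 2 := mul_le_mul_of_nonneg_right (ha t ht) (sq_nonneg _)
  exact mul_nonpos_of_nonneg_of_nonpos (exp_pos _).le (by nlinarith)

theorem eventually_sq_le_of_hasDerivWithinAt_neg_mul_add {s a g : ℝ → ℝ} {α δ t₀ : ℝ}
    (hα : 0 < α) (hδ : 0 < δ)
    (hs : ∀ t ∈ Ici t₀, HasDerivWithinAt s (-a t * s t + g t) (Ici t₀) t)
    (ha : ∀ t ∈ Ici t₀, α ≤ a t) (hg : Tendsto g atTop (𝓝 0)) :
    ∀ᶠ t in atTop, s t ^ 2 ≤ 2 * δ ^ 2 := by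
  have hg_small : ∀ᶠ t in atTop, |g t| ≤ α * δ :=
    hg.abs.eventually (ge_mem_nhds (by rw [abs_zero]; positivity))
  obtain ⟨T, hT⟩ := eventually_atTop.mp ((eventually_ge_atTop t₀).and hg_small)
  have hT₀ : t₀ ≤ T := (hT T le_rfl).1
  have hψ := antitoneOn_exp_mul_sq_sub_sq (s := s) (a := a) (g := g) hα.le
    (fun t ht => (hs t (hT₀.trans ht)).mono (Ici_subset_Ici.mpr hT₀))
    (fun t ht => ha t (hT₀.trans ht)) (fun t ht => (hT t ht).2)
  have hexp : Tendsto (fun t => exp (α * t) * δ ^ 2) atTop atTop :=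
    (tendsto_exp_atTop.comp (tendsto_id.const_mul_atTop hα)).atTop_mul_const (by positivity)
  filter_upwards [eventually_ge_atTop T,
    hexp.eventually_ge_atTop (exp (α * T) * (s T ^ 2 - δ ^ 2))] with t hTt hbig
  have hweighted := (hψ self_mem_Ici hTt hTt).trans hbig
  nlinarith [le_of_mul_le_mul_left hweighted (exp_pos (α * t))]

theorem tendsto_zero_of_hasDerivWithinAt_neg_mul_add {s a g : ℝ → ℝ} {α t₀ : ℝ}
    (hα : 0 < α) (hs : ∀ t ∈ Ici t₀, HasDerivWithinAt s (-a t * s t + g t) (Ici t₀) t)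
    (ha : ∀ t ∈ Ici t₀, α ≤ a t) (hg : Tendsto g atTop (𝓝 0)) :
    Tendsto s atTop (𝓝 0) := by
  refine Metric.tendsto_nhds.mpr fun ε hε => ?_
  filter_upwards [eventually_sq_le_of_hasDerivWithinAt_neg_mul_add hα (half_pos hε) hs ha hg]
    with t ht
  rw [Real.dist_eq, sub_zero]
  exact abs_lt_of_sq_lt_sq (by nlinarith) hε.le

theorem tendsto_sub_of_tendsto_inv_sub {ι : Type*} {l : Filter ι} {f g : ι → ℝ} {M : ℝ}
    (hf : ∀ᶠ i in l, f i ≠ 0 ∧ |f i| ≤ M) (hg : ∀ᶠ i in l, g i ≠ 0 ∧ |g i| ≤ M)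
    (h : Tendsto (fun i => (g i)⁻¹ - (f i)⁻¹) l (𝓝 0)) :
    Tendsto (fun i => f i - g i) l (𝓝 0) := by
  have hbdd : IsBoundedUnder (· ≤ ·) l fun i => ‖f i * g i‖ :=
    isBoundedUnder_of_eventually_le (a := M * M) <| by
      filter_upwards [hf, hg] with i hfi hgi
      rw [norm_mul]
      exact mul_le_mul hfi.2 hgi.2 (norm_nonneg _) ((abs_nonneg _).trans hfi.2)
  refine (h.zero_mul_isBoundedUnder_le hbdd).congr' ?_
  filter_upwards [hf, hg] with i hfi hgi
  field_simp [hfi.1, hgi.1]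

theorem perturbed_logistic_asymptotic_general
    (a b eps : ℝ → ℝ) (aMin : ℝ) (haMin : 0 < aMin)
    (ha_lb : ∀ t, 0 ≤ t → aMin ≤ a t)
    (heps_lim : Tendsto eps atTop (nhds 0))
    (m M : ℝ) (hm : 0 < m)
    (yhat y : ℝ → ℝ)
    (hyhat_lb : ∀ t, 0 ≤ t → m ≤ yhat t) (hyhat_ub : ∀ t, 0 ≤ t → yhat t ≤ M)
    (hy_lb : ∀ t, 0 ≤ t → m ≤ y t) (hy_ub : ∀ t, 0 ≤ t → y t ≤ M)
    (hd_hat : ∀ t, 0 ≤ t →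
      HasDerivWithinAt yhat (yhat t * (a t - eps t - b t * yhat t)) (Set.Ici 0) t)
    (hd : ∀ t, 0 ≤ t → HasDerivWithinAt y (y t * (a t - b t * y t)) (Set.Ici 0) t) :
    Tendsto (fun t => y t - yhat t) atTop (nhds 0) := by
  have hyhat_pos t (ht : 0 ≤ t) : 0 < yhat t := hm.trans_le (hyhat_lb t ht)
  have hy_pos t (ht : 0 ≤ t) : 0 < y t := hm.trans_le (hy_lb t ht)
  have hs : ∀ t ∈ Ici (0 : ℝ), HasDerivWithinAt (fun u => (yhat u)⁻¹ - (y u)⁻¹)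
      (-a t * ((yhat t)⁻¹ - (y t)⁻¹) + eps t * (yhat t)⁻¹) (Ici 0) t := fun t ht =>
    (((hd_hat t ht).inv_of_logistic (hyhat_pos t ht).ne').sub
      ((hd t ht).inv_of_logistic (hy_pos t ht).ne')).congr_deriv (by ring)
  have hforcing : Tendsto (fun t => eps t * (yhat t)⁻¹) atTop (𝓝 0) :=
    heps_lim.zero_mul_isBoundedUnder_le <| isBoundedUnder_of_eventually_le (a := m⁻¹) <| by
      filter_upwards [eventually_ge_atTop 0] with t ht
      rw [Function.comp_apply, norm_inv, Real.norm_of_nonneg (hyhat_pos t ht).le]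
      exact inv_anti₀ hm (hyhat_lb t ht)
  have hbounds (f : ℝ → ℝ) (hf_lb : ∀ t, 0 ≤ t → m ≤ f t) (hf_ub : ∀ t, 0 ≤ t → f t ≤ M) :
      ∀ᶠ t in atTop, f t ≠ 0 ∧ |f t| ≤ M := by
    filter_upwards [eventually_ge_atTop 0] with t ht
    have hft := hm.trans_le (hf_lb t ht)
    exact ⟨hft.ne', (abs_of_pos hft).trans_le (hf_ub t ht)⟩
  exact tendsto_sub_of_tendsto_inv_sub (hbounds y hy_lb hy_ub) (hbounds yhat hyhat_lb hyhat_ub)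
    (tendsto_zero_of_hasDerivWithinAt_neg_mul_add haMin hs ha_lb hforcing)

/-- A bounded positive solution of the perturbed logistic equation
`ŷ' = ŷ(a(t) - ε(t) - b(t)ŷ)` with vanishing nonnegative perturbation `ε(t) → 0`
is asymptotic to a bounded positive solution of `y' = y(a(t) - b(t)y)`. -/
theorem perturbed_logistic_asymptotic
    (a b eps : ℝ → ℝ) (aMin : ℝ) (haMin : 0 < aMin)
    (ha : ContinuousOn a (Set.Ici 0)) (hb : ContinuousOn b (Set.Ici 0))
    (heps_cont : ContinuousOn eps (Set.Ici 0))
    (ha_lb : ∀ t, 0 ≤ t → aMin ≤ a t)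
    (heps_nonneg : ∀ t, 0 ≤ t → 0 ≤ eps t)
    (heps_lim : Tendsto eps atTop (nhds 0))
    (m M : ℝ) (hm : 0 < m) (hmM : m ≤ M)
    (yhat y : ℝ → ℝ)
    (hyhat_lb : ∀ t, 0 ≤ t → m ≤ yhat t) (hyhat_ub : ∀ t, 0 ≤ t → yhat t ≤ M)
    (hy_lb : ∀ t, 0 ≤ t → m ≤ y t) (hy_ub : ∀ t, 0 ≤ t → y t ≤ M)
    (hd_hat : ∀ t, 0 ≤ t →
      HasDerivWithinAt yhat (yhat t * (a t - eps t - b t * yhat t)) (Set.Ici 0) t)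
    (hd : ∀ t, 0 ≤ t → HasDerivWithinAt y (y t * (a t - b t * y t)) (Set.Ici 0) t) :
    Tendsto (fun t => y t - yhat t) atTop (nhds 0) :=
  perturbed_logistic_asymptotic_general a b eps aMin haMin ha_lb heps_lim m M hm yhat y hyhat_lb
    hyhat_ub hy_lb hy_ub hd_hat hd
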